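/- Let A be a tense DRL-algebra and let C(A) = {x ∈ A : c ≤ x}, regarded as a tense ICRDL-algebra with product x·y := (x ∗ y) ∨ c, implication x → y := ∼(x ∗ (∼y)), bottom c, top 1, and the restrictions of G, H, F, P. For a tense filter D of A, set S_D := D ∩ C(A); for a tense filter S of C(A), set D_S := {u ∈ A : u ∨ c ∈ S and c ⇒ u ∈ S}. Then S_D is a tense filter of C(A), D_S is a tense filter of A, and the assignments D ↦ S_D and S ↦ D_S are mutually inverse and inclusion-preserving, hence establish a poset isomorphism between the tense filters of A and the tense filters of C(A). -/
import Mathlib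


/-- A c-differential residuated lattice (DRL-algebra): a bounded lattice with a
commutative monoid operation `mul` with identity `⊤`, an involution `inv` that is
a dual lattice automorphism, a constant `c` fixed by the involution, a residuation
law for the implication `x ⇒ y := inv (mul x (inv y))`, and the Leibniz condition. -/
structure DRL (α : Type*) [Lattice α] [BoundedOrder α] where
  mul : α → α → α
  inv : α → α
  c : α
  mul_comm : ∀ x y : α, mul x y = mul y x
  mul_assoc : ∀ x y z : α, mul (mul x y) z = mul x (mul y z)
  mul_one : ∀ x : α, mul x ⊤ = x
  inv_inv : ∀ x : α, inv (inv x) = x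
  inv_sup : ∀ x y : α, inv (x ⊔ y) = inv x ⊓ inv y
  inv_inf : ∀ x y : α, inv (x ⊓ y) = inv x ⊔ inv y
  inv_c : inv c = c
  resid : ∀ x y z : α, mul x y ≤ z ↔ x ≤ inv (mul y (inv z))
  leibniz : ∀ x y : α, mul x y ⊓ c = mul (x ⊓ c) y ⊔ mul x (y ⊓ c)

/-- The implication `x ⇒ y := ∼(x ∗ ∼y)` of a DRL-algebra. -/
def DRL.imp {α : Type*} [Lattice α] [BoundedOrder α] (A : DRL α) (x y : α) : α :=
  A.inv (A.mul x (A.inv y))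

/-- A tense DRL-algebra: a DRL-algebra with tense operators G and H, where
`F x := ∼G(∼x)` and `P x := ∼H(∼x)`. -/
structure TenseDRL (α : Type*) [Lattice α] [BoundedOrder α] extends DRL α where
  G : α → α
  H : α → α
  t0G : G ⊤ = ⊤
  t0H : H ⊤ = ⊤
  t1G : G c = c
  t1H : H c = c
  t2G : ∀ x y : α, G (x ⊓ y) = G x ⊓ G y
  t2H : ∀ x y : α, H (x ⊓ y) = H x ⊓ H y
  t3G : ∀ x : α, x ≤ G (inv (H (inv x)))
  t3H : ∀ x : α, x ≤ H (inv (G (inv x)))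
  t4G : ∀ x y : α, G (x ⊔ y) ≤ G x ⊔ inv (G (inv y))
  t4H : ∀ x y : α, H (x ⊔ y) ≤ H x ⊔ inv (H (inv y))
  t5G : ∀ x y : α, G (inv (mul x (inv y))) ≤ inv (mul (G x) (inv (G y)))
  t5H : ∀ x y : α, H (inv (mul x (inv y))) ≤ inv (mul (H x) (inv (H y)))

/-- The operator `F x := ∼G(∼x)` of a tense DRL-algebra. -/
def TenseDRL.F {α : Type*} [Lattice α] [BoundedOrder α] (A : TenseDRL α) (x : α) : α :=
  A.inv (A.G (A.inv x))

/-- The operator `P x := ∼H(∼x)` of a tense DRL-algebra. -/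
def TenseDRL.P {α : Type*} [Lattice α] [BoundedOrder α] (A : TenseDRL α) (x : α) : α :=
  A.inv (A.H (A.inv x))

/-- D is a tense filter of the tense DRL-algebra A: a nonempty up-set closed
under ∗, G and H. -/
def IsTenseFilterDRL {α : Type*} [Lattice α] [BoundedOrder α]
    (A : TenseDRL α) (D : Set α) : Prop :=
  D.Nonempty ∧ (∀ x ∈ D, ∀ y : α, x ≤ y → y ∈ D) ∧
  (∀ x ∈ D, ∀ y ∈ D, A.mul x y ∈ D) ∧
  (∀ x ∈ D, A.G x ∈ D) ∧ (∀ x ∈ D, A.H x ∈ D)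

/-- S is a tense filter of the tense ICRDL-algebra C(A) = {x : c ≤ x} (with
product x·y := (x ∗ y) ∨ c): a nonempty subset of C(A) that is an up-set in
C(A), closed under ·, G and H. -/
def IsTenseFilterC {α : Type*} [Lattice α] [BoundedOrder α]
    (A : TenseDRL α) (S : Set α) : Prop :=
  S ⊆ {x : α | A.c ≤ x} ∧ S.Nonempty ∧
  (∀ x ∈ S, ∀ y : α, A.c ≤ y → x ≤ y → y ∈ S) ∧
  (∀ x ∈ S, ∀ y ∈ S, A.mul x y ⊔ A.c ∈ S) ∧
  (∀ x ∈ S, A.G x ∈ S) ∧ (∀ x ∈ S, A.H x ∈ S)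


section Aux
variable {α : Type*} [Lattice α] [BoundedOrder α] (A : DRL α)

lemma drl_inv_anti {x y : α} (h : x ≤ y) : A.inv y ≤ A.inv x := by
  have hxy : A.inv y = A.inv x ⊓ A.inv y := by rw [← A.inv_sup, sup_eq_right.mpr h]
  rw [hxy]; exact inf_le_left

lemma drl_mul_mono {x x' y y' : α} (hx : x ≤ x') (hy : y ≤ y') :
    A.mul x y ≤ A.mul x' y' := by
  have h1 : A.mul x y ≤ A.mul x' y :=
    (A.resid x y (A.mul x' y)).mpr (le_trans hx ((A.resid x' y (A.mul x' y)).mp le_rfl))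
  have h2 : A.mul x' y ≤ A.mul x' y' := by
    rw [A.mul_comm x' y, A.mul_comm x' y']
    exact (A.resid y x' (A.mul y' x')).mpr
      (le_trans hy ((A.resid y' x' (A.mul y' x')).mp le_rfl))
  exact le_trans h1 h2

lemma drl_mul_le_left (x y : α) : A.mul x y ≤ x := by
  have h := drl_mul_mono A (le_refl x) (le_top : y ≤ ⊤)
  rwa [A.mul_one] at h

lemma drl_mul_sup (x y z : α) : A.mul (x ⊔ y) z = A.mul x z ⊔ A.mul y z := by
  apply le_antisymm
  · exact (A.resid _ _ _).mpr (sup_le ((A.resid _ _ _).mp le_sup_left)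
      ((A.resid _ _ _).mp le_sup_right))
  · exact sup_le (drl_mul_mono A le_sup_left le_rfl) (drl_mul_mono A le_sup_right le_rfl)

lemma drl_inv_bot : A.inv ⊥ = ⊤ := by
  refine le_antisymm le_top ?_
  have h := drl_inv_anti A (bot_le : (⊥ : α) ≤ A.inv ⊤)
  rwa [A.inv_inv] at h

lemma drl_mul_eq_bot {x y : α} (h : x ≤ A.inv y) : A.mul x y = ⊥ := by
  refine le_antisymm ((A.resid _ _ _).mpr ?_) bot_le
  rwa [drl_inv_bot, A.mul_one]

lemma drl_mul_c_eq_bot {y : α} (h : y ≤ A.c) : A.mul A.c y = ⊥ := by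
  apply drl_mul_eq_bot
  have h2 := drl_inv_anti A h
  rwa [A.inv_c] at h2

lemma drl_c_le_imp (u : α) : A.c ≤ A.imp A.c u := by
  have h : A.mul A.c (A.inv u) ≤ A.c := drl_mul_le_left A _ _
  have h2 := drl_inv_anti A h
  rwa [A.inv_c] at h2

lemma drl_imp_c_mul_c_le (u : α) : A.mul (A.imp A.c u) A.c ≤ u :=
  (A.resid _ _ _).mpr le_rfl

lemma drl_imp_c_mono {u v : α} (h : u ≤ v) : A.imp A.c u ≤ A.imp A.c v :=
  drl_inv_anti A (drl_mul_mono A le_rfl (drl_inv_anti A h))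

lemma drl_key (u : α) : A.mul (u ⊔ A.c) (A.imp A.c u) ≤ u := by
  rw [drl_mul_sup]
  refine sup_le (drl_mul_le_left A u _) ?_
  rw [A.mul_comm]
  exact drl_imp_c_mul_c_le A u

lemma drl_le_imp_c_self (u : α) : u ≤ A.imp A.c u :=
  (A.resid u A.c u).mp (drl_mul_le_left A u A.c)

lemma drl_imp_c_of_le {u : α} (h : A.c ≤ u) : A.imp A.c u = ⊤ := by
  have h1 : A.inv u ≤ A.c := by
    have h2 := drl_inv_anti A h; rwa [A.inv_c] at h2
  show A.inv (A.mul A.c (A.inv u)) = ⊤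
  rw [drl_mul_c_eq_bot A h1, drl_inv_bot]

end Aux

section TAux
variable {α : Type*} [Lattice α] [BoundedOrder α] (A : TenseDRL α)

lemma tdrl_G_mono {x y : α} (h : x ≤ y) : A.G x ≤ A.G y := by
  have h2 := A.t2G x y
  rw [inf_eq_left.mpr h] at h2
  exact h2.le.trans inf_le_right

lemma tdrl_H_mono {x y : α} (h : x ≤ y) : A.H x ≤ A.H y := by
  have h2 := A.t2H x y
  rw [inf_eq_left.mpr h] at h2
  exact h2.le.trans inf_le_right

lemma tdrl_G_sup_c (u : α) : A.G (u ⊔ A.c) ≤ A.G u ⊔ A.c := by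
  have h := A.t4G u A.c
  rwa [A.inv_c, A.t1G, A.inv_c] at h

lemma tdrl_H_sup_c (u : α) : A.H (u ⊔ A.c) ≤ A.H u ⊔ A.c := by
  have h := A.t4H u A.c
  rwa [A.inv_c, A.t1H, A.inv_c] at h

lemma tdrl_G_imp_c (u : α) : A.G (A.toDRL.imp A.c u) ≤ A.toDRL.imp A.c (A.G u) := by
  have h := A.t5G A.c u
  rwa [A.t1G] at h

lemma tdrl_H_imp_c (u : α) : A.H (A.toDRL.imp A.c u) ≤ A.toDRL.imp A.c (A.H u) := by
  have h := A.t5H A.c u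
  rwa [A.t1H] at h

end TAux

/-- The assignments D ↦ S_D := D ∩ C(A) and S ↦ D_S := {u : u ∨ c ∈ S and
c ⇒ u ∈ S} are mutually inverse, inclusion-preserving bijections between the
tense filters of A and the tense filters of C(A). -/
theorem tense_drl_filter_iso {α : Type*} [Lattice α] [BoundedOrder α]
    (A : TenseDRL α) :
    (∀ D : Set α, IsTenseFilterDRL A D →
      IsTenseFilterC A (D ∩ {x : α | A.c ≤ x})) ∧
    (∀ S : Set α, IsTenseFilterC A S →
      IsTenseFilterDRL A {u : α | u ⊔ A.c ∈ S ∧ A.imp A.c u ∈ S}) ∧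
    (∀ D : Set α, IsTenseFilterDRL A D →
      {u : α | u ⊔ A.c ∈ D ∩ {x : α | A.c ≤ x} ∧
        A.imp A.c u ∈ D ∩ {x : α | A.c ≤ x}} = D) ∧
    (∀ S : Set α, IsTenseFilterC A S →
      {u : α | u ⊔ A.c ∈ S ∧ A.imp A.c u ∈ S} ∩ {x : α | A.c ≤ x} = S) ∧
    (∀ D D' : Set α, IsTenseFilterDRL A D → IsTenseFilterDRL A D' →
      (D ⊆ D' ↔ D ∩ {x : α | A.c ≤ x} ⊆ D' ∩ {x : α | A.c ≤ x})) := by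
  refine ⟨?_, ?_, ?_, ?_, ?_⟩
  · -- S_D is a tense filter of C(A)
    rintro D ⟨⟨d, hd⟩, hup, hmul, hG, hH⟩
    have htop : (⊤ : α) ∈ D := hup d hd ⊤ le_top
    refine ⟨Set.inter_subset_right, ⟨⊤, htop, le_top⟩, ?_, ?_, ?_, ?_⟩
    · rintro x ⟨hx, -⟩ y hcy hxy
      exact ⟨hup x hx y hxy, hcy⟩
    · rintro x ⟨hx, -⟩ y ⟨hy, -⟩
      exact ⟨hup _ (hmul x hx y hy) _ le_sup_left, le_sup_right⟩
    · rintro x ⟨hx, hcx⟩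
      refine ⟨hG x hx, ?_⟩
      have h := tdrl_G_mono A hcx
      rwa [A.t1G] at h
    · rintro x ⟨hx, hcx⟩
      refine ⟨hH x hx, ?_⟩
      have h := tdrl_H_mono A hcx
      rwa [A.t1H] at h
  · -- D_S is a tense filter of A
    rintro S ⟨hC, ⟨s, hs⟩, hup, hmul, hG, hH⟩
    have htop : (⊤ : α) ∈ S := hup s hs ⊤ le_top le_top
    refine ⟨⟨⊤, ?_, ?_⟩, ?_, ?_, ?_, ?_⟩
    · show ⊤ ⊔ A.c ∈ S
      rw [sup_eq_left.mpr le_top]; exact htop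
    · show A.toDRL.imp A.c ⊤ ∈ S
      rw [drl_imp_c_of_le A.toDRL le_top]; exact htop
    · rintro u ⟨hu1, hu2⟩ v huv
      exact ⟨hup _ hu1 _ le_sup_right (sup_le_sup_right huv A.c),
             hup _ hu2 _ (drl_c_le_imp A.toDRL v) (drl_imp_c_mono A.toDRL huv)⟩
    · rintro u ⟨hu1, hu2⟩ v ⟨hv1, hv2⟩
      set p := A.mul (u ⊔ A.c) (A.toDRL.imp A.c u) with hp
      set q := A.mul (v ⊔ A.c) (A.toDRL.imp A.c v) with hq
      have hpu : p ≤ u := drl_key A.toDRL u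
      have hqv : q ≤ v := drl_key A.toDRL v
      have s1 : p ⊔ A.c ∈ S := hmul _ hu1 _ hu2
      have s2 : q ⊔ A.c ∈ S := hmul _ hv1 _ hv2
      constructor
      · -- mul u v ⊔ c ∈ S
        have s3 : A.mul (p ⊔ A.c) (q ⊔ A.c) ⊔ A.c ∈ S := hmul _ s1 _ s2
        have hb1 : A.mul p (q ⊔ A.c) ≤ A.mul u v ⊔ A.c := by
          rw [A.mul_comm, drl_mul_sup]
          refine sup_le ?_ (le_trans (drl_mul_le_left A.toDRL _ _) le_sup_right)
          calc A.mul q p ≤ A.mul v u := drl_mul_mono A.toDRL hqv hpu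
            _ = A.mul u v := A.mul_comm v u
            _ ≤ A.mul u v ⊔ A.c := le_sup_left
        have hb : A.mul (p ⊔ A.c) (q ⊔ A.c) ≤ A.mul u v ⊔ A.c := by
          rw [drl_mul_sup]
          exact sup_le hb1 (le_trans (drl_mul_le_left A.toDRL _ _) le_sup_right)
        exact hup _ s3 _ le_sup_right (sup_le hb le_sup_right)
      · -- imp c (mul u v) ∈ S
        have s4 : A.mul (p ⊔ A.c) (A.toDRL.imp A.c v) ⊔ A.c ∈ S := hmul _ s1 _ hv2
        have hrv : A.mul (A.toDRL.imp A.c v) A.c ≤ v := drl_imp_c_mul_c_le A.toDRL v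
        have hrc : A.mul (A.toDRL.imp A.c v) A.c ≤ A.c := by
          rw [A.mul_comm]; exact drl_mul_le_left A.toDRL _ _
        have key : A.mul (A.mul (p ⊔ A.c) (A.toDRL.imp A.c v) ⊔ A.c) A.c
            ≤ A.mul u v := by
          rw [drl_mul_sup, A.mul_assoc, drl_mul_sup, drl_mul_c_eq_bot A.toDRL le_rfl,
              drl_mul_c_eq_bot A.toDRL hrc]
          simp only [sup_bot_eq]
          exact drl_mul_mono A.toDRL hpu hrv
        exact hup _ s4 _ (drl_c_le_imp A.toDRL _) ((A.resid _ _ _).mp key)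
    · rintro u ⟨hu1, hu2⟩
      exact ⟨hup _ (hG _ hu1) _ le_sup_right (tdrl_G_sup_c A u),
             hup _ (hG _ hu2) _ (drl_c_le_imp A.toDRL _) (tdrl_G_imp_c A u)⟩
    · rintro u ⟨hu1, hu2⟩
      exact ⟨hup _ (hH _ hu1) _ le_sup_right (tdrl_H_sup_c A u),
             hup _ (hH _ hu2) _ (drl_c_le_imp A.toDRL _) (tdrl_H_imp_c A u)⟩
  · -- D_{S_D} = D
    rintro D ⟨⟨d, hd⟩, hup, hmul, hG, hH⟩
    ext u
    simp only [Set.mem_setOf_eq, Set.mem_inter_iff]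
    constructor
    · rintro ⟨⟨h1, -⟩, ⟨h2, -⟩⟩
      exact hup _ (hmul _ h1 _ h2) u (drl_key A.toDRL u)
    · intro hu
      exact ⟨⟨hup u hu _ le_sup_left, le_sup_right⟩,
             ⟨hup u hu _ (drl_le_imp_c_self A.toDRL u), drl_c_le_imp A.toDRL u⟩⟩
  · -- S_{D_S} = S
    rintro S ⟨hC, ⟨s, hs⟩, hup, hmul, hG, hH⟩
    have htop : (⊤ : α) ∈ S := hup s hs ⊤ le_top le_top
    ext x
    simp only [Set.mem_inter_iff, Set.mem_setOf_eq]
    constructor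
    · rintro ⟨⟨h1, -⟩, hcx⟩
      rwa [sup_eq_left.mpr hcx] at h1
    · intro hx
      have hcx : A.c ≤ x := hC hx
      refine ⟨⟨?_, ?_⟩, hcx⟩
      · rwa [sup_eq_left.mpr hcx]
      · rw [drl_imp_c_of_le A.toDRL hcx]; exact htop
  · -- inclusion preserving
    rintro D D' ⟨-, hup, hmul, -, -⟩ ⟨-, hup', hmul', -, -⟩
    constructor
    · intro h x hx
      exact ⟨h hx.1, hx.2⟩
    · intro h u hu
      have h1 : u ⊔ A.c ∈ D' := (h ⟨hup u hu _ le_sup_left, le_sup_right⟩).1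
      have h2 : A.toDRL.imp A.c u ∈ D' :=
        (h ⟨hup u hu _ (drl_le_imp_c_self A.toDRL u), drl_c_le_imp A.toDRL u⟩).1
      exact hup' _ (hmul' _ h1 _ h2) u (drl_key A.toDRL u)
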